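/- arXiv:1612.07011 — 6 statements merged into one kernel-verified Lean document; each statement's English description precedes it below -/
import Mathlib

section
/- Let A = [[a,b],[c,d]] be an invertible 2×2 matrix over a field F and let P(λ) and Q(λ) be matrix polynomials over F of grades g₁ and g₂ respectively, such that the product P(λ)Q(λ) is defined. Then the Möbius transformation of the product equals the product of the Möbius transformations: M_A[PQ](λ) = M_A[P](λ) · M_A[Q](λ), where PQ is considered as a matrix polynomial of grade g₁+g₂. -/
/-!
Entrywise, `M_A[P]` is the grade-`g` homogenization `P̂(x, y)` of each entry, evaluated at
`(x, y) = (aλ + b, cλ + d)`. Homogenization turns products of polynomials of degrees at most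
`g₁`, `g₂` into products of forms of degrees `g₁`, `g₂`, and it is additive; evaluation is a ring
homomorphism, so `M_A` commutes with the sums and products in the matrix product.
-/

open Polynomial

/-- The Möbius transformation of a matrix polynomial `P` (of grade `g`) induced by the
2×2 matrix `A = [[a,b],[c,d]]`:  `M_A[P](λ) = ∑_{i=0}^g P_i (aλ+b)^i (cλ+d)^{g-i}`. -/
noncomputable def mobius {F : Type*} [Field F] {m n : Type*}
    (a b c d : F) (g : ℕ) (P : Matrix m n (Polynomial F)) : Matrix m n (Polynomial F) :=
  ∑ i ∈ Finset.range (g + 1),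
    ((C a * X + C b) ^ i * (C c * X + C d) ^ (g - i)) • P.map (fun p => C (p.coeff i))

lemma mobius_apply {F : Type*} [Field F] {m n : Type*} (a b c d : F) (g : ℕ)
    (P : Matrix m n F[X]) (i : m) (j : n) :
    mobius a b c d g P i j =
      MvPolynomial.aeval ![C a * X + C b, C c * X + C d] ((P i j).homogenize g) := by
  simp only [mobius, homogenize, Finset.Nat.sum_antidiagonal_eq_sum_range_succ_mk, map_sum,
    MvPolynomial.aeval_monomial, Matrix.sum_apply]
  refine Finset.sum_congr rfl fun k _ => ?_
  rw [Finsupp.prod_fintype _ _ (by simp), Fin.prod_univ_two]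
  simp only [Matrix.smul_apply, Matrix.map_apply, smul_eq_mul, Finsupp.update_apply,
    Finsupp.single_eq_same, Matrix.cons_val_zero, Matrix.cons_val_one, zero_ne_one, if_false,
    if_true, algebraMap_eq]
  ring

theorem mobius_mul_general {F : Type*} [Field F] {m n p : Type*} [Fintype n]
    (a b c d : F) (g₁ g₂ : ℕ)
    (P : Matrix m n (Polynomial F)) (Q : Matrix n p (Polynomial F))
    (hP : ∀ i j, (P i j).degree ≤ (g₁ : ℕ)) (hQ : ∀ i j, (Q i j).degree ≤ (g₂ : ℕ)) :
    mobius a b c d (g₁ + g₂) (P * Q) = mobius a b c d g₁ P * mobius a b c d g₂ Q := by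
  ext i j : 1
  simp only [mobius_apply, Matrix.mul_apply, homogenize_finsetSum, map_sum]
  refine Finset.sum_congr rfl fun k _ => ?_
  rw [homogenize_mul _ _ (natDegree_le_iff_degree_le.mpr (hP i k))
    (natDegree_le_iff_degree_le.mpr (hQ k j)), map_mul]

/-- Möbius transformations respect products of matrix polynomials:
`M_A[PQ] = M_A[P] · M_A[Q]`, where `P`, `Q` have grades `g₁`, `g₂` and `PQ` is considered
as a matrix polynomial of grade `g₁ + g₂`. -/
theorem mobius_mul {F : Type*} [Field F] {m n p : Type*} [Fintype n]
    (a b c d : F) (hA : a * d - b * c ≠ 0) (g₁ g₂ : ℕ)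
    (P : Matrix m n (Polynomial F)) (Q : Matrix n p (Polynomial F))
    (hP : ∀ i j, (P i j).degree ≤ (g₁ : ℕ)) (hQ : ∀ i j, (Q i j).degree ≤ (g₂ : ℕ)) :
    mobius a b c d (g₁ + g₂) (P * Q) = mobius a b c d g₁ P * mobius a b c d g₂ Q :=
  mobius_mul_general a b c d g₁ g₂ P Q hP hQ
end

section
/- Let K(λ) = Σ_{i=0}^ℓ K_i λ^i be an m×n matrix polynomial of degree ℓ such that K(λ₀) has full row rank for all λ₀ in the algebraic closure of F and the leading coefficient K_ℓ has full row rank, and let A = [[a,b],[c,d]] ∈ GL(2,F). Then the Möbius transform M_A[K](λ) (taken with grade ℓ) satisfies the same two properties: M_A[K](λ₀) has full row rank for all λ₀ in the algebraic closure of F, and the leading coefficient of M_A[K] (which equals Σ_{i=0}^ℓ K_i a^i c^{ℓ-i}) has full row rank. -/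
/-!
Full row rank of `K(λ₀)` for every `λ₀`, together with full row rank of `K_ℓ`, says exactly that
the homogenized pencil `∑ u^i v^(ℓ-i) K_i` has full row rank at every point `(u, v) ≠ (0, 0)`
(for `v ≠ 0` it is `v^ℓ K(u/v)`, for `v = 0` it is `u^ℓ K_ℓ`). The Möbius transform evaluates this
homogenized pencil at `(aλ₀ + b, cλ₀ + d)` and its leading coefficient is its value at `(a, c)`;
since `A` is invertible neither point is `(0, 0)`. Full row rank of a matrix over `F` is tested
over the algebraic closure, as it is invariant under field extension.
-/

namespace Matrix

variable {ι κ F : Type*} [Fintype ι] [Fintype κ] [Field F]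

theorem rank_eq_card_iff_exists_mul_eq_one [DecidableEq ι] {A : Matrix ι κ F} :
    A.rank = Fintype.card ι ↔ ∃ B : Matrix κ ι F, A * B = 1 := by
  rw [← mulVec_surjective_iff_exists_right_inverse, ← coe_mulVecLin, ← LinearMap.range_eq_top]
  refine ⟨fun h => Submodule.eq_top_of_finrank_eq ?_, fun h => ?_⟩
  · rw [← rank, h, Module.finrank_fintype_fun_eq_card]
  · rw [rank, h, finrank_top, Module.finrank_fintype_fun_eq_card]

theorem rank_eq_card_iff_injective_vecMul {A : Matrix ι κ F} :
    A.rank = Fintype.card ι ↔ Function.Injective A.vecMul := by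
  rw [vecMul_injective_iff]
  refine ⟨fun h => linearIndependent_iff_card_eq_finrank_span.mpr ?_, LinearIndependent.rank_matrix⟩
  rw [Set.finrank, ← rank_eq_finrank_span_row, h]

theorem rank_map_eq_card_iff {E : Type*} [Field E] (f : F →+* E) {A : Matrix ι κ F} :
    (A.map f).rank = Fintype.card ι ↔ A.rank = Fintype.card ι := by
  classical
  refine ⟨fun h => ?_, fun h => ?_⟩
  · rw [rank_eq_card_iff_injective_vecMul] at h ⊢
    intro v w hvw
    have hmap : (f ∘ v) ᵥ* A.map f = (f ∘ w) ᵥ* A.map f := funext fun j => by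
      rw [← RingHom.map_vecMul, ← RingHom.map_vecMul, show v ᵥ* A = w ᵥ* A from hvw]
    exact funext fun i => f.injective (congrFun (h hmap) i)
  · obtain ⟨B, hAB⟩ := rank_eq_card_iff_exists_mul_eq_one.mp h
    exact rank_eq_card_iff_exists_mul_eq_one.mpr
      ⟨B.map f, by rw [← Matrix.map_mul, hAB, Matrix.map_one f f.map_zero f.map_one]⟩

end Matrix

open Finset

theorem sum_pow_mul_zero_pow_smul {R V : Type*} [Semiring R] [AddCommMonoid V] [Module R V]
    (ℓ : ℕ) (M : ℕ → V) (u : R) :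
    ∑ i ∈ range (ℓ + 1), (u ^ i * 0 ^ (ℓ - i)) • M i = u ^ ℓ • M ℓ := by
  rw [sum_eq_single_of_mem ℓ (self_mem_range_succ ℓ)]
  · simp
  · intro i hi hne
    have : ℓ - i ≠ 0 := by grind
    rw [zero_pow this, mul_zero, zero_smul]

theorem sum_pow_mul_pow_smul_eq_pow_smul_sum {E V : Type*} [Field E] [AddCommMonoid V]
    [Module E V] (ℓ : ℕ) (M : ℕ → V) (u : E) {v : E} (hv : v ≠ 0) :
    ∑ i ∈ range (ℓ + 1), (u ^ i * v ^ (ℓ - i)) • M i =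
      v ^ ℓ • ∑ i ∈ range (ℓ + 1), (u / v) ^ i • M i := by
  rw [smul_sum]
  refine sum_congr rfl fun i hi => ?_
  rw [smul_smul, pow_sub₀ v hv (by grind), div_pow]
  congr 1
  ring

theorem Matrix.rank_sum_pow_mul_pow_smul_eq_card {ι κ E : Type*} [Fintype ι] [Fintype κ]
    [Field E] (ℓ : ℕ) (M : ℕ → Matrix ι κ E)
    (hrank : ∀ t : E, (∑ i ∈ range (ℓ + 1), t ^ i • M i).rank = Fintype.card ι)
    (hlead : (M ℓ).rank = Fintype.card ι) {u v : E} (huv : (u, v) ≠ 0) :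
    (∑ i ∈ range (ℓ + 1), (u ^ i * v ^ (ℓ - i)) • M i).rank = Fintype.card ι := by
  by_cases hv : v = 0
  · have hu : u ≠ 0 := fun hu => huv (by rw [hu, hv, Prod.mk_zero_zero])
    rw [hv, sum_pow_mul_zero_pow_smul,
      rank_smul_of_mem_nonZeroDivisors _ (mem_nonZeroDivisors_of_ne_zero (pow_ne_zero ℓ hu)), hlead]
  · rw [sum_pow_mul_pow_smul_eq_pow_smul_sum ℓ M u hv,
      rank_smul_of_mem_nonZeroDivisors _ (mem_nonZeroDivisors_of_ne_zero (pow_ne_zero ℓ hv)),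
      hrank]

theorem mobius_constant_row_degrees_minimal_basis_general {F : Type*} [Field F] {m n : ℕ} (ℓ : ℕ)
    (K : ℕ → Matrix (Fin m) (Fin n) F)
    (a b c d : F) (hA : a * d - b * c ≠ 0)
    (hrank : ∀ lam : AlgebraicClosure F,
      (∑ i ∈ Finset.range (ℓ + 1),
        lam ^ i • (K i).map (algebraMap F (AlgebraicClosure F))).rank = m)
    (hlead : (K ℓ).rank = m) :
    (∀ lam : AlgebraicClosure F,
      (∑ i ∈ Finset.range (ℓ + 1),
        ((algebraMap F (AlgebraicClosure F) a * lam + algebraMap F (AlgebraicClosure F) b) ^ i *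
         (algebraMap F (AlgebraicClosure F) c * lam + algebraMap F (AlgebraicClosure F) d) ^ (ℓ - i)) •
        (K i).map (algebraMap F (AlgebraicClosure F))).rank = m) ∧
    (∑ i ∈ Finset.range (ℓ + 1), (a ^ i * c ^ (ℓ - i)) • K i).rank = m := by
  set f := algebraMap F (AlgebraicClosure F)
  have homogenized {u v : AlgebraicClosure F} (huv : (u, v) ≠ 0) :
      (∑ i ∈ range (ℓ + 1), (u ^ i * v ^ (ℓ - i)) • (K i).map f).rank = m := by
    simpa using Matrix.rank_sum_pow_mul_pow_smul_eq_card ℓ (fun i => (K i).map f)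
      (by simpa using hrank) ((Matrix.rank_map_eq_card_iff f).mpr (by simpa using hlead)) huv
  have hac : (f a, f c) ≠ 0 := by
    intro h
    simp only [Prod.mk_eq_zero, map_eq_zero] at h
    exact hA (by rw [h.1, h.2]; ring)
  refine ⟨fun lam => homogenized fun h => hA (f.injective ?_), ?_⟩
  · obtain ⟨hu, hv⟩ := Prod.mk_eq_zero.mp h
    rw [map_zero, map_sub, map_mul, map_mul]
    linear_combination f a * hv - f c * hu
  · have hmap : (∑ i ∈ range (ℓ + 1), (a ^ i * c ^ (ℓ - i)) • K i).map f =
        ∑ i ∈ range (ℓ + 1), (f a ^ i * f c ^ (ℓ - i)) • (K i).map f := by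
      ext
      simp [Matrix.sum_apply, map_sum]
    have hmap_rank : (Matrix.map (∑ i ∈ range (ℓ + 1), (a ^ i * c ^ (ℓ - i)) • K i) f).rank =
        Fintype.card (Fin m) := by
      rw [hmap, Fintype.card_fin]
      exact homogenized hac
    simpa using (Matrix.rank_map_eq_card_iff f).mp hmap_rank

/-- If `K(λ) = ∑_{i=0}^ℓ K_i λ^i` is an `m×n` matrix polynomial such that `K(λ₀)` has
full row rank for all `λ₀` in the algebraic closure of `F` and its leading coefficient
`K_ℓ` has full row rank (i.e., `K` is a minimal basis with all row degrees equal to `ℓ`),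
and `A = [[a,b],[c,d]] ∈ GL(2,F)`, then the Möbius transform `M_A[K]` (taken with grade
`ℓ`) satisfies the same two properties; its leading coefficient is `∑_{i=0}^ℓ K_i a^i c^{ℓ-i}`. -/
theorem mobius_constant_row_degrees_minimal_basis {F : Type*} [Field F] {m n : ℕ} (ℓ : ℕ)
    (K : ℕ → Matrix (Fin m) (Fin n) F)
    (hgrade : ∀ i, ℓ < i → K i = 0)
    (a b c d : F) (hA : a * d - b * c ≠ 0)
    (hrank : ∀ lam : AlgebraicClosure F,
      (∑ i ∈ Finset.range (ℓ + 1),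
        lam ^ i • (K i).map (algebraMap F (AlgebraicClosure F))).rank = m)
    (hlead : (K ℓ).rank = m) :
    (∀ lam : AlgebraicClosure F,
      (∑ i ∈ Finset.range (ℓ + 1),
        ((algebraMap F (AlgebraicClosure F) a * lam + algebraMap F (AlgebraicClosure F) b) ^ i *
         (algebraMap F (AlgebraicClosure F) c * lam + algebraMap F (AlgebraicClosure F) d) ^ (ℓ - i)) •
        (K i).map (algebraMap F (AlgebraicClosure F))).rank = m) ∧
    (∑ i ∈ Finset.range (ℓ + 1), (a ^ i * c ^ (ℓ - i)) • K i).rank = m :=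
  mobius_constant_row_degrees_minimal_basis_general ℓ K a b c d hA hrank hlead
end

section
/- Let P(λ) = Σ_{i=0}^g P_i λ^i and Q(λ) = Σ_{i=0}^t Q_i λ^i be matrix polynomials (over ℝ or ℂ) such that the product P(λ)Q(λ) is defined. Then ‖P(λ)Q(λ)‖_F ≤ √(g+1) · √(Σ_{i=0}^g ‖P_i‖₂²) · ‖Q(λ)‖_F, where ‖·‖₂ is the spectral norm of a matrix and the Frobenius norm of a matrix polynomial is ‖P(λ)‖_F := √(Σ_i ‖P_i‖_F²). -/
open Polynomial

/-- The `i`-th coefficient matrix of a matrix polynomial. -/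
noncomputable def polyCoeff {m n : Type*} (M : Matrix m n (Polynomial ℂ)) (i : ℕ) :
    Matrix m n ℂ := M.map (fun p => p.coeff i)

/-- The Frobenius norm of a matrix polynomial:
`‖P(λ)‖_F = √(∑_i ‖P_i‖_F²)` (independent of the grade chosen). -/
noncomputable def polyFrobNorm {m n : Type*} [Fintype m] [Fintype n]
    (M : Matrix m n (Polynomial ℂ)) : ℝ :=
  Real.sqrt (∑' i : ℕ, ∑ r, ∑ c, ‖(M r c).coeff i‖ ^ 2)

/-- The spectral norm (largest singular value) of a constant matrix. -/
noncomputable def specNorm {m n : Type*} [Fintype m] [Fintype n] (M : Matrix m n ℂ) : ℝ :=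
  sSup {r : ℝ | ∃ v : n → ℂ, ∑ j, ‖v j‖ ^ 2 = 1 ∧
    r = Real.sqrt (∑ i, ‖M.mulVec v i‖ ^ 2)}

/-!
Writing `P = ∑_{i ≤ g} λ^i P_i` gives `PQ = ∑_{i ≤ g} λ^i (P_i Q)`. Multiplying by `λ^i` only
shifts coefficients, so it does not change the Frobenius norm, and applying
`‖P_i B‖_F ≤ ‖P_i‖₂ ‖B‖_F` to each coefficient `B` of `Q` gives `‖P_i Q‖_F ≤ ‖P_i‖₂ ‖Q‖_F`.
Since the Frobenius norm of a matrix polynomial is the `ℓ²` norm of its sequence of coefficient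
matrices, it satisfies the triangle inequality, and Cauchy–Schwarz on `∑_i ‖P_i‖₂` finishes.
-/

open Finset

lemma Finset.sum_le_sqrt_card_mul_sqrt_sum_sq {ι : Type*} (s : Finset ι) (f : ι → ℝ) :
    ∑ i ∈ s, f i ≤ √(#s : ℝ) * √(∑ i ∈ s, f i ^ 2) := by
  rw [← Real.sqrt_mul (Nat.cast_nonneg _)]
  exact (le_abs_self _).trans (Real.abs_le_sqrt sq_sum_le_card_mul_sum_sq)

section PolyCoeff

variable {m n p : Type*}

lemma polyCoeff_add (M N : Matrix m n ℂ[X]) (k : ℕ) :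
    polyCoeff (M + N) k = polyCoeff M k + polyCoeff N k := by
  ext; simp [polyCoeff]

lemma polyCoeff_X_pow_smul (i : ℕ) (M : Matrix m n ℂ[X]) (k : ℕ) :
    polyCoeff ((X ^ i : ℂ[X]) • M) k = if i ≤ k then polyCoeff M (k - i) else 0 := by
  ext r c
  split_ifs <;> simp [polyCoeff, coeff_X_pow_mul', *]

lemma polyCoeff_map_C_mul [Fintype n] (A : Matrix m n ℂ) (Q : Matrix n p ℂ[X]) (k : ℕ) :
    polyCoeff (A.map C * Q) k = A * polyCoeff Q k := by
  ext r c
  simp [polyCoeff, Matrix.mul_apply]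

lemma sum_X_pow_smul_map_C_polyCoeff {g : ℕ} (P : Matrix m n ℂ[X])
    (hP : ∀ i j, (P i j).degree ≤ g) :
    ∑ i ∈ range (g + 1), (X ^ i : ℂ[X]) • (polyCoeff P i).map C = P := by
  ext r c
  conv_rhs => rw [as_sum_range_C_mul_X_pow' (P r c)
    (Nat.lt_succ_of_le (natDegree_le_of_degree_le (hP r c)))]
  simp only [Matrix.sum_apply, Matrix.smul_apply, Matrix.map_apply, polyCoeff, smul_eq_mul,
    X_pow_mul]

lemma finite_setOf_polyCoeff_ne_zero [Finite m] [Finite n] (M : Matrix m n ℂ[X]) :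
    {k | polyCoeff M k ≠ 0}.Finite := by
  refine (Set.finite_iUnion fun r => Set.finite_iUnion fun c =>
    (M r c).support.finite_toSet).subset fun k hk => ?_
  obtain ⟨r, c, hrc⟩ : ∃ r c, polyCoeff M k r c ≠ 0 := by
    by_contra! h; exact hk (Matrix.ext h)
  exact Set.mem_iUnion₂.2 ⟨r, c, mem_support_iff.2 hrc⟩

end PolyCoeff

section SpecNorm

open Matrix

variable {m n : Type*} [Fintype m] [Fintype n]

lemma specNorm_nonneg (A : Matrix m n ℂ) : 0 ≤ specNorm A :=
  Real.sSup_nonneg <| by rintro _ ⟨v, -, rfl⟩; exact Real.sqrt_nonneg _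

lemma norm_mulVec_le_specNorm_mul (A : Matrix m n ℂ) (v : EuclideanSpace ℂ n) :
    ‖(WithLp.toLp 2 (A *ᵥ v.ofLp) : EuclideanSpace ℂ m)‖ ≤ specNorm A * ‖v‖ := by
  classical
  let f : EuclideanSpace ℂ n →L[ℂ] EuclideanSpace ℂ m :=
    LinearMap.toContinuousLinearMap (toLpLin 2 2 A)
  have hf (w : EuclideanSpace ℂ n) : ‖f w‖ = √(∑ i, ‖(A *ᵥ w.ofLp) i‖ ^ 2) :=
    EuclideanSpace.norm_eq _
  have hsphere (w : EuclideanSpace ℂ n) : ‖w‖ = 1 ↔ ∑ j, ‖w.ofLp j‖ ^ 2 = 1 := by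
    rw [EuclideanSpace.norm_eq, Real.sqrt_eq_one]
  have hbdd : BddAbove {r : ℝ | ∃ v : n → ℂ, ∑ j, ‖v j‖ ^ 2 = 1 ∧
      r = √(∑ i, ‖(A *ᵥ v) i‖ ^ 2)} := by
    refine ⟨‖f‖, ?_⟩
    rintro _ ⟨w, hw, rfl⟩
    simpa [← hf, (hsphere (WithLp.toLp 2 w)).2 hw] using f.le_opNorm (WithLp.toLp 2 w)
  have hopNorm : ‖f‖ ≤ specNorm A :=
    f.opNorm_le_of_unit_norm (specNorm_nonneg A) fun w hw =>
      le_csSup hbdd ⟨w.ofLp, (hsphere w).1 hw, hf w⟩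
  exact (f.le_opNorm v).trans (mul_le_mul_of_nonneg_right hopNorm (norm_nonneg v))

end SpecNorm

section Frobenius

attribute [local instance] Matrix.frobeniusNormedAddCommGroup

variable {l m n p : Type*} [Fintype l] [Fintype m] [Fintype n] [Fintype p]

lemma frobenius_norm_sq {α : Type*} [NormedAddCommGroup α] (A : Matrix m n α) :
    ‖A‖ ^ 2 = ∑ r, ∑ c, ‖A r c‖ ^ 2 := by
  change ‖WithLp.toLp 2 fun r => WithLp.toLp 2 fun c => A r c‖ ^ 2 = _
  simp [PiLp.norm_sq_eq_of_L2]

lemma frobenius_norm_mul_le_specNorm_mul (A : Matrix l m ℂ) (B : Matrix m n ℂ) :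
    ‖A * B‖ ≤ specNorm A * ‖B‖ := by
  have hcol (c : n) : ∑ r, ‖(A * B) r c‖ ^ 2 ≤ specNorm A ^ 2 * ∑ j, ‖B j c‖ ^ 2 := by
    have h := pow_le_pow_left₀ (norm_nonneg _)
      (norm_mulVec_le_specNorm_mul A (WithLp.toLp 2 fun j => B j c)) 2
    rwa [mul_pow, EuclideanSpace.norm_eq, EuclideanSpace.norm_eq, Real.sq_sqrt (by positivity),
      Real.sq_sqrt (by positivity)] at h
  refine (pow_le_pow_iff_left₀ (norm_nonneg _) (by positivity [specNorm_nonneg A])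
    two_ne_zero).1 ?_
  calc ‖A * B‖ ^ 2 = ∑ c, ∑ r, ‖(A * B) r c‖ ^ 2 := by rw [frobenius_norm_sq, Finset.sum_comm]
    _ ≤ ∑ c, specNorm A ^ 2 * ∑ j, ‖B j c‖ ^ 2 := Finset.sum_le_sum fun c _ => hcol c
    _ = (specNorm A * ‖B‖) ^ 2 := by
      rw [mul_pow, frobenius_norm_sq, ← Finset.mul_sum, Finset.sum_comm]

lemma polyFrobNorm_eq_sqrt_tsum (M : Matrix m n ℂ[X]) :
    polyFrobNorm M = √(∑' k, ‖polyCoeff M k‖ ^ 2) := by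
  simp only [polyFrobNorm, frobenius_norm_sq, polyCoeff, Matrix.map_apply]

lemma summable_norm_polyCoeff_sq (M : Matrix m n ℂ[X]) :
    Summable fun k => ‖polyCoeff M k‖ ^ 2 :=
  summable_of_hasFiniteSupport <| (finite_setOf_polyCoeff_ne_zero M).subset fun k hk => by
    simpa using hk

lemma memℓp_polyCoeff (M : Matrix m n ℂ[X]) : Memℓp (polyCoeff M) 2 :=
  (memℓp_zero (finite_setOf_polyCoeff_ne_zero M)).of_exponent_ge zero_le

noncomputable def coeffLp : Matrix m n ℂ[X] →+ lp (fun _ : ℕ => Matrix m n ℂ) 2 where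
  toFun M := ⟨polyCoeff M, memℓp_polyCoeff M⟩
  map_zero' := by ext k : 2; exact Matrix.map_zero (fun q : ℂ[X] => q.coeff k) (coeff_zero k)
  map_add' M N := by ext k : 2; exact polyCoeff_add M N k

lemma polyFrobNorm_eq_norm_coeffLp (M : Matrix m n ℂ[X]) : polyFrobNorm M = ‖coeffLp M‖ := by
  rw [polyFrobNorm_eq_sqrt_tsum, lp.norm_eq_tsum_rpow (by norm_num), Real.sqrt_eq_rpow]
  simp [coeffLp]

lemma polyFrobNorm_sum_le {ι : Type*} (s : Finset ι) (M : ι → Matrix m n ℂ[X]) :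
    polyFrobNorm (∑ i ∈ s, M i) ≤ ∑ i ∈ s, polyFrobNorm (M i) := by
  simp only [polyFrobNorm_eq_norm_coeffLp, map_sum]
  exact norm_sum_le _ _

lemma polyFrobNorm_X_pow_smul (i : ℕ) (M : Matrix m n ℂ[X]) :
    polyFrobNorm ((X ^ i : ℂ[X]) • M) = polyFrobNorm M := by
  simp only [polyFrobNorm_eq_sqrt_tsum, polyCoeff_X_pow_smul]
  congr 1
  rw [← (add_left_injective i).tsum_eq]
  · simp
  · intro k hk
    have hik : i ≤ k := by
      by_contra h
      simp [h] at hk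
    exact ⟨k - i, Nat.sub_add_cancel hik⟩

lemma polyFrobNorm_map_C_mul_le (A : Matrix m n ℂ) (Q : Matrix n p ℂ[X]) :
    polyFrobNorm (A.map C * Q) ≤ specNorm A * polyFrobNorm Q := by
  simp only [polyFrobNorm_eq_sqrt_tsum, polyCoeff_map_C_mul]
  calc √(∑' k, ‖A * polyCoeff Q k‖ ^ 2)
      ≤ √(∑' k, specNorm A ^ 2 * ‖polyCoeff Q k‖ ^ 2) := by
        refine Real.sqrt_le_sqrt <| Summable.tsum_le_tsum (fun k => ?_)
          (by simpa only [polyCoeff_map_C_mul] using summable_norm_polyCoeff_sq (A.map C * Q))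
          ((summable_norm_polyCoeff_sq Q).mul_left _)
        rw [← mul_pow]
        exact pow_le_pow_left₀ (norm_nonneg _) (frobenius_norm_mul_le_specNorm_mul A _) 2
    _ = specNorm A * √(∑' k, ‖polyCoeff Q k‖ ^ 2) := by
      rw [tsum_mul_left, Real.sqrt_mul (sq_nonneg _), Real.sqrt_sq (specNorm_nonneg A)]

end Frobenius

theorem polyFrobNorm_mul_le_general {m n p : Type*} [Fintype m] [Fintype n] [Fintype p]
    (g : ℕ) (P : Matrix m n (Polynomial ℂ)) (Q : Matrix n p (Polynomial ℂ))
    (hP : ∀ i j, (P i j).degree ≤ (g : ℕ)) :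
    polyFrobNorm (P * Q) ≤
      Real.sqrt ((g : ℝ) + 1) *
        Real.sqrt (∑ i ∈ Finset.range (g + 1), specNorm (polyCoeff P i) ^ 2) *
        polyFrobNorm Q := by
  have hPQ : P * Q = ∑ i ∈ range (g + 1), (X ^ i : ℂ[X]) • ((polyCoeff P i).map C * Q) := by
    conv_lhs => rw [← sum_X_pow_smul_map_C_polyCoeff P hP]
    simp only [Matrix.sum_mul, Matrix.smul_mul]
  calc polyFrobNorm (P * Q)
      ≤ ∑ i ∈ range (g + 1), polyFrobNorm ((X ^ i : ℂ[X]) • ((polyCoeff P i).map C * Q)) :=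
        hPQ ▸ polyFrobNorm_sum_le _ _
    _ = ∑ i ∈ range (g + 1), polyFrobNorm ((polyCoeff P i).map C * Q) := by
        simp only [polyFrobNorm_X_pow_smul]
    _ ≤ (∑ i ∈ range (g + 1), specNorm (polyCoeff P i)) * polyFrobNorm Q := by
        rw [Finset.sum_mul]
        exact Finset.sum_le_sum fun i _ => polyFrobNorm_map_C_mul_le _ Q
    _ ≤ _ := by
        refine mul_le_mul_of_nonneg_right ?_ (Real.sqrt_nonneg _)
        simpa using Finset.sum_le_sqrt_card_mul_sqrt_sum_sq (range (g + 1)) _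

/-- `‖P(λ)Q(λ)‖_F ≤ √(g+1) · √(∑_{i=0}^g ‖P_i‖₂²) · ‖Q(λ)‖_F` for matrix polynomials
`P` of grade `g` and `Q` of grade `t`. -/
theorem polyFrobNorm_mul_le {m n p : Type*} [Fintype m] [Fintype n] [Fintype p]
    (g t : ℕ) (P : Matrix m n (Polynomial ℂ)) (Q : Matrix n p (Polynomial ℂ))
    (hP : ∀ i j, (P i j).degree ≤ (g : ℕ)) (hQ : ∀ i j, (Q i j).degree ≤ (t : ℕ)) :
    polyFrobNorm (P * Q) ≤
      Real.sqrt ((g : ℝ) + 1) *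
        Real.sqrt (∑ i ∈ Finset.range (g + 1), specNorm (polyCoeff P i) ^ 2) *
        polyFrobNorm Q :=
  polyFrobNorm_mul_le_general g P Q hP
end

section
/- Let P(λ) be an m×n(k+1) matrix polynomial of grade g and Λ_k(λ) = (λ^k,...,λ,1)^T. Then ‖P(λ)·(Λ_k(λ)⊗I_n)‖_F ≤ min{√(g+1), √(k+1)} · ‖P(λ)‖_F, where ⊗ is the Kronecker product. -/
open Polynomial Kronecker

private lemma normsq_sum_le_aux {ι : Type*} [Fintype ι] [DecidableEq ι] (a : ι → ℂ) (N : ℕ)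
    (hN : (Finset.univ.filter (fun i => a i ≠ 0)).card ≤ N) :
    ‖∑ i, a i‖ ^ 2 ≤ (N : ℝ) * ∑ i, ‖a i‖ ^ 2 := by
  classical
  set S := Finset.univ.filter (fun i => a i ≠ 0) with hS
  have h1 : ∑ i ∈ S, a i = ∑ i, a i := Finset.sum_filter_ne_zero _
  calc ‖∑ i, a i‖ ^ 2 = ‖∑ i ∈ S, a i‖ ^ 2 := by rw [h1]
    _ ≤ (∑ i ∈ S, ‖a i‖) ^ 2 :=
        pow_le_pow_left₀ (norm_nonneg _) (norm_sum_le S a) 2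
    _ ≤ S.card * ∑ i ∈ S, ‖a i‖ ^ 2 := sq_sum_le_card_mul_sum_sq
    _ ≤ (N : ℝ) * ∑ i, ‖a i‖ ^ 2 := by
        refine mul_le_mul (by exact_mod_cast hN) ?_
          (Finset.sum_nonneg fun i _ => sq_nonneg _) (Nat.cast_nonneg N)
        exact Finset.sum_le_sum_of_subset_of_nonneg (Finset.subset_univ S)
          (fun i _ _ => sq_nonneg _)

/-- `‖P(λ)·(Λ_k(λ) ⊗ I_p)‖_F ≤ min{√(g+1), √(k+1)} · ‖P(λ)‖_F`, where
`Λ_k(λ) = (λ^k, ..., λ, 1)^T` and `P` is a matrix polynomial of grade `g` with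
`n(k+1)` columns. -/
theorem polyFrobNorm_mul_lambda_kron_le {m : Type*} [Fintype m] (k p g : ℕ)
    (P : Matrix m (Fin (k + 1) × Fin p) (Polynomial ℂ))
    (hP : ∀ i j, (P i j).degree ≤ (g : ℕ))
    (Λ : Matrix (Fin (k + 1)) (Fin 1) (Polynomial ℂ))
    (hΛ : ∀ i j, Λ i j = X ^ (k - (i : ℕ))) :
    polyFrobNorm (P * (Λ ⊗ₖ (1 : Matrix (Fin p) (Fin p) (Polynomial ℂ)))) ≤
      min (Real.sqrt ((g : ℝ) + 1)) (Real.sqrt ((k : ℝ) + 1)) * polyFrobNorm P := by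
  classical
  set Q := P * (Λ ⊗ₖ (1 : Matrix (Fin p) (Fin p) (Polynomial ℂ))) with hQdef
  set N : ℕ := min (g + 1) (k + 1) with hNdef
  -- coefficients of P vanish above g
  have hPz : ∀ (r : m) (x : Fin (k+1) × Fin p) (s : ℕ), g < s → (P r x).coeff s = 0 := by
    intro r x s hs
    exact coeff_eq_zero_of_degree_lt (lt_of_le_of_lt (hP r x) (by exact_mod_cast hs))
  -- coefficient formula for Q
  have hcoeff : ∀ (r : m) (c : Fin 1 × Fin p) (t : ℕ),
      (Q r c).coeff t
        = ∑ i : Fin (k+1), if k - (i:ℕ) ≤ t then (P r (i, c.2)).coeff (t - (k - (i:ℕ))) else 0 := by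
    intro r c t
    have h1 : Q r c = ∑ i : Fin (k+1), P r (i, c.2) * X ^ (k - (i:ℕ)) := by
      rw [hQdef, Matrix.mul_apply, Fintype.sum_prod_type]
      refine Finset.sum_congr rfl fun i _ => ?_
      simp [Matrix.kroneckerMap_apply, Matrix.one_apply, hΛ, mul_ite, mul_one, mul_zero,
        Finset.sum_ite_eq', mul_comm]
    rw [h1, finset_sum_coeff]
    exact Finset.sum_congr rfl fun i _ => coeff_mul_X_pow' _ _ _
  -- abbreviation for summand terms
  set a : m → Fin p → Fin (k+1) → ℕ → ℂ :=
    fun r c2 i t => if k - (i:ℕ) ≤ t then (P r (i, c2)).coeff (t - (k - (i:ℕ))) else 0 with ha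
  have haz : ∀ r c2 i t, k + g < t → a r c2 i t = 0 := by
    intro r c2 i t ht
    rw [ha]
    dsimp only
    split_ifs with h
    · exact hPz r (i, c2) _ (by omega)
    · rfl
  -- Step A : pointwise Cauchy–Schwarz bound
  have stepA : ∀ r c2 t, ‖∑ i, a r c2 i t‖ ^ 2 ≤ (N : ℝ) * ∑ i, ‖a r c2 i t‖ ^ 2 := by
    intro r c2 t
    refine normsq_sum_le_aux _ N ?_
    set S := Finset.univ.filter (fun i => a r c2 i t ≠ 0) with hSdef
    have hle1 : S.card ≤ k + 1 := le_trans (Finset.card_le_univ S) (by simp)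
    have hle2 : S.card ≤ g + 1 := by
      have : ∀ i ∈ S, t - (k - (i:ℕ)) ∈ Finset.range (g+1) := by
        intro i hi
        rw [hSdef, Finset.mem_filter] at hi
        rcases hi with ⟨-, hi⟩
        rw [ha] at hi
        dsimp only at hi
        split_ifs at hi with h
        · have : ¬ g < t - (k - (i:ℕ)) := fun hgt => hi (hPz r (i, c2) _ hgt)
          simp only [Finset.mem_range]; omega
        · exact absurd rfl hi
      have hinj : ∀ i ∈ S, ∀ j ∈ S, t - (k - (i:ℕ)) = t - (k - (j:ℕ)) → i = j := by
        intro i hi j hj hij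
        rw [hSdef, Finset.mem_filter] at hi hj
        have hi' : k - (i:ℕ) ≤ t := by
          by_contra h
          exact hi.2 (by rw [ha]; dsimp only; rw [if_neg h])
        have hj' : k - (j:ℕ) ≤ t := by
          by_contra h
          exact hj.2 (by rw [ha]; dsimp only; rw [if_neg h])
        have hik : (i:ℕ) ≤ k := Nat.lt_succ_iff.mp i.isLt
        have hjk : (j:ℕ) ≤ k := Nat.lt_succ_iff.mp j.isLt
        exact Fin.ext (by omega)
      calc S.card ≤ (Finset.range (g+1)).card :=
            Finset.card_le_card_of_injOn _ this hinj
        _ = g + 1 := Finset.card_range _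
    exact le_min hle2 hle1
  -- Step B : change of variables
  have stepB : ∀ r c2 (i : Fin (k+1)),
      ∑ t ∈ Finset.range (k + g + 1), ‖a r c2 i t‖ ^ 2
        = ∑ s ∈ Finset.range (g + 1), ‖(P r (i, c2)).coeff s‖ ^ 2 := by
    intro r c2 i
    have hsub : (Finset.range (g+1)).image (· + (k - (i:ℕ))) ⊆ Finset.range (k + g + 1) := by
      intro t ht
      simp only [Finset.mem_image, Finset.mem_range] at ht ⊢
      obtain ⟨s, hs, rfl⟩ := ht
      omega
    have hzero : ∀ t ∈ Finset.range (k + g + 1),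
        t ∉ (Finset.range (g+1)).image (· + (k - (i:ℕ))) → ‖a r c2 i t‖ ^ 2 = 0 := by
      intro t _ hni
      have : a r c2 i t = 0 := by
        rw [ha]; dsimp only
        split_ifs with h
        · refine hPz r (i, c2) _ ?_
          by_contra hle
          push_neg at hle
          exact hni (Finset.mem_image.mpr ⟨t - (k - (i:ℕ)), Finset.mem_range.mpr (by omega),
            by omega⟩)
        · rfl
      rw [this]; simp
    rw [← Finset.sum_subset hsub hzero,
      Finset.sum_image (fun x _ y _ h => by omega)]
    refine Finset.sum_congr rfl fun s _ => ?_
    have h1 : a r c2 i (s + (k - (i:ℕ))) = (P r (i, c2)).coeff s := by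
      rw [ha]; dsimp only
      rw [if_pos (Nat.le_add_left _ _), Nat.add_sub_cancel]
    rw [h1]
  -- the main inequality on sums of squares
  have key : (∑' t : ℕ, ∑ r, ∑ c, ‖(Q r c).coeff t‖ ^ 2)
      ≤ (N : ℝ) * ∑' s : ℕ, ∑ r, ∑ x, ‖(P r x).coeff s‖ ^ 2 := by
    have hT : ∀ t ∉ Finset.range (k + g + 1), (∑ r, ∑ c, ‖(Q r c).coeff t‖ ^ 2) = 0 := by
      intro t ht
      have ht' : k + g < t := by simpa [Nat.lt_succ_iff] using Finset.mem_range.not.mp ht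
      refine Finset.sum_eq_zero fun r _ => Finset.sum_eq_zero fun c _ => ?_
      rw [hcoeff]
      rw [Finset.sum_eq_zero fun i _ => haz r c.2 i t ht']
      simp
    have hS : ∀ s ∉ Finset.range (g + 1), (∑ r, ∑ x : Fin (k+1) × Fin p, ‖(P r x).coeff s‖ ^ 2) = 0 := by
      intro s hs
      have hs' : g < s := by simpa [Nat.lt_succ_iff] using Finset.mem_range.not.mp hs
      refine Finset.sum_eq_zero fun r _ => Finset.sum_eq_zero fun x _ => ?_
      rw [hPz r x s hs']
      simp
    rw [tsum_eq_sum hT, tsum_eq_sum hS]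
    calc ∑ t ∈ Finset.range (k+g+1), ∑ r, ∑ c : Fin 1 × Fin p, ‖(Q r c).coeff t‖ ^ 2
        = ∑ r, ∑ c2 : Fin p, ∑ t ∈ Finset.range (k+g+1), ‖∑ i, a r c2 i t‖ ^ 2 := by
          rw [Finset.sum_comm]
          refine Finset.sum_congr rfl fun r _ => ?_
          rw [Finset.sum_comm]
          rw [Fintype.sum_prod_type, Fin.sum_univ_one]
          refine Finset.sum_congr rfl fun c2 _ => Finset.sum_congr rfl fun t _ => ?_
          rw [hcoeff r (0, c2) t]
      _ ≤ ∑ r, ∑ c2 : Fin p, ∑ t ∈ Finset.range (k+g+1), (N:ℝ) * ∑ i, ‖a r c2 i t‖ ^ 2 := by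
          refine Finset.sum_le_sum fun r _ => Finset.sum_le_sum fun c2 _ =>
            Finset.sum_le_sum fun t _ => stepA r c2 t
      _ = (N:ℝ) * ∑ r, ∑ c2 : Fin p, ∑ i : Fin (k+1), ∑ t ∈ Finset.range (k+g+1), ‖a r c2 i t‖ ^ 2 := by
          simp_rw [← Finset.mul_sum]
          congr 1
          refine Finset.sum_congr rfl fun r _ => Finset.sum_congr rfl fun c2 _ => ?_
          rw [Finset.sum_comm]
      _ = (N:ℝ) * ∑ r, ∑ c2 : Fin p, ∑ i : Fin (k+1), ∑ s ∈ Finset.range (g+1), ‖(P r (i, c2)).coeff s‖ ^ 2 := by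
          congr 1
          exact Finset.sum_congr rfl fun r _ => Finset.sum_congr rfl fun c2 _ =>
            Finset.sum_congr rfl fun i _ => stepB r c2 i
      _ = (N:ℝ) * ∑ s ∈ Finset.range (g+1), ∑ r, ∑ x : Fin (k+1) × Fin p, ‖(P r x).coeff s‖ ^ 2 := by
          congr 1
          calc ∑ r, ∑ c2 : Fin p, ∑ i : Fin (k+1), ∑ s ∈ Finset.range (g+1),
                  ‖(P r (i, c2)).coeff s‖ ^ 2
              = ∑ r, ∑ c2 : Fin p, ∑ s ∈ Finset.range (g+1), ∑ i : Fin (k+1),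
                  ‖(P r (i, c2)).coeff s‖ ^ 2 :=
                Finset.sum_congr rfl fun r _ => Finset.sum_congr rfl fun c2 _ =>
                  Finset.sum_comm
            _ = ∑ r, ∑ s ∈ Finset.range (g+1), ∑ c2 : Fin p, ∑ i : Fin (k+1),
                  ‖(P r (i, c2)).coeff s‖ ^ 2 :=
                Finset.sum_congr rfl fun r _ => Finset.sum_comm
            _ = ∑ s ∈ Finset.range (g+1), ∑ r, ∑ c2 : Fin p, ∑ i : Fin (k+1),
                  ‖(P r (i, c2)).coeff s‖ ^ 2 := Finset.sum_comm
            _ = ∑ s ∈ Finset.range (g+1), ∑ r, ∑ x : Fin (k+1) × Fin p,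
                  ‖(P r x).coeff s‖ ^ 2 := by
                refine Finset.sum_congr rfl fun s _ => Finset.sum_congr rfl fun r _ => ?_
                rw [Fintype.sum_prod_type]
                exact Finset.sum_comm
  -- conclude via square roots
  have hmin : min (Real.sqrt ((g : ℝ) + 1)) (Real.sqrt ((k : ℝ) + 1)) = Real.sqrt (N : ℝ) := by
    have hmono : Monotone Real.sqrt := fun a b h => Real.sqrt_le_sqrt h
    rw [← hmono.map_min]
    congr 1
    rw [hNdef]
    push_cast
    rfl
  rw [polyFrobNorm, polyFrobNorm, hmin, ← Real.sqrt_mul (Nat.cast_nonneg N)]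
  exact Real.sqrt_le_sqrt key
end

section
/- Let E_k = [I_k | 0] ∈ ℝ^{k×(k+1)} and F_k = [0 | I_k] ∈ ℝ^{k×(k+1)}, and define the 2k² × 2k(k+1) matrix T̂ with block structure T̂ = [[I_k ⊗ E_k, E_k ⊗ I_k],[I_k ⊗ F_k, F_k ⊗ I_k]]. Define T̂₅ = [[I_k ⊗ E_k, -E_k ⊗ I_k],[-I_k ⊗ F_k, F_k ⊗ I_k]]. Then T̂₅ and T̂ have the same singular values; in particular σ_min(T̂₅) = σ_min(T̂). -/
open Matrix Kronecker

/-- The smallest singular value of a real matrix `M` (with full row rank, `m ≤ n`):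
the infimum of `‖uᵀM‖₂` over unit vectors `u`. -/
noncomputable def sigmaMin {m n : Type*} [Fintype m] [Fintype n] (M : Matrix m n ℝ) : ℝ :=
  sInf {r : ℝ | ∃ u : m → ℝ, ∑ i, (u i) ^ 2 = 1 ∧
    r = Real.sqrt (∑ j, (Matrix.vecMul u M j) ^ 2)}

/-- `T̂ = [[I⊗E, E⊗I],[I⊗F, F⊗I]]`. -/
noncomputable def That (k : ℕ) (E F : Matrix (Fin k) (Fin (k + 1)) ℝ) :
    Matrix ((Fin k × Fin k) ⊕ (Fin k × Fin k)) ((Fin k × Fin (k + 1)) ⊕ (Fin (k + 1) × Fin k)) ℝ :=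
  Matrix.fromBlocks ((1 : Matrix (Fin k) (Fin k) ℝ) ⊗ₖ E) (E ⊗ₖ (1 : Matrix (Fin k) (Fin k) ℝ))
    ((1 : Matrix (Fin k) (Fin k) ℝ) ⊗ₖ F) (F ⊗ₖ (1 : Matrix (Fin k) (Fin k) ℝ))

/-- `T̂₅ = [[I⊗E, -E⊗I],[-I⊗F, F⊗I]]`. -/
noncomputable def That5 (k : ℕ) (E F : Matrix (Fin k) (Fin (k + 1)) ℝ) :
    Matrix ((Fin k × Fin k) ⊕ (Fin k × Fin k)) ((Fin k × Fin (k + 1)) ⊕ (Fin (k + 1) × Fin k)) ℝ :=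
  Matrix.fromBlocks ((1 : Matrix (Fin k) (Fin k) ℝ) ⊗ₖ E) (-(E ⊗ₖ (1 : Matrix (Fin k) (Fin k) ℝ)))
    (-((1 : Matrix (Fin k) (Fin k) ℝ) ⊗ₖ F)) (F ⊗ₖ (1 : Matrix (Fin k) (Fin k) ℝ))

private lemma neg_one_pow_mul_self (n : ℕ) : ((-1 : ℝ) ^ n) * ((-1 : ℝ) ^ n) = 1 := by
  rw [← pow_add]
  exact Even.neg_one_pow ⟨n, rfl⟩

private lemma neg_one_pow_mul_succ (n : ℕ) :
    ((-1 : ℝ) ^ n) * ((-1 : ℝ) ^ (n + 1)) = -1 := by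
  rw [pow_succ, ← mul_assoc, neg_one_pow_mul_self, one_mul]

/-- Conjugating by an involutive matrix preserves the characteristic polynomial. -/
private lemma charpoly_conj_invol {n : Type*} [Fintype n] [DecidableEq n]
    (D M : Matrix n n ℝ) (hD : D * D = 1) :
    (D * M * D).charpoly = M.charpoly := by
  classical
  have hD' : (Polynomial.C : ℝ →+* Polynomial ℝ).mapMatrix D *
      (Polynomial.C : ℝ →+* Polynomial ℝ).mapMatrix D = 1 := by
    rw [← _root_.map_mul Polynomial.C.mapMatrix, hD, _root_.map_one]
  have hchar : charmatrix (D * M * D) =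
      (Polynomial.C : ℝ →+* Polynomial ℝ).mapMatrix D * charmatrix M *
        (Polynomial.C : ℝ →+* Polynomial ℝ).mapMatrix D := by
    unfold charmatrix
    rw [mul_sub, sub_mul]
    congr 1
    · rw [((Matrix.scalar_commute (Polynomial.X : Polynomial ℝ)
        (fun r => Commute.all _ _) (Polynomial.C.mapMatrix D)).symm).eq, mul_assoc, hD', mul_one]
    · rw [_root_.map_mul Polynomial.C.mapMatrix, _root_.map_mul Polynomial.C.mapMatrix]
  unfold Matrix.charpoly
  rw [hchar, Matrix.det_mul, Matrix.det_mul]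
  have : ((Polynomial.C : ℝ →+* Polynomial ℝ).mapMatrix D).det *
      ((Polynomial.C : ℝ →+* Polynomial ℝ).mapMatrix D).det = 1 := by
    rw [← Matrix.det_mul, hD', Matrix.det_one]
  calc ((Polynomial.C : ℝ →+* Polynomial ℝ).mapMatrix D).det * (charmatrix M).det *
        ((Polynomial.C : ℝ →+* Polynomial ℝ).mapMatrix D).det
      = (charmatrix M).det * (((Polynomial.C : ℝ →+* Polynomial ℝ).mapMatrix D).det *
        ((Polynomial.C : ℝ →+* Polynomial ℝ).mapMatrix D).det) := by ring
    _ = (charmatrix M).det := by rw [this, mul_one]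

private lemma sigma_set_subset {m n : Type*} [Fintype m] [Fintype n]
    (M5 M : Matrix m n ℝ) (ρ : m → ℝ) (γ : n → ℝ)
    (hρ : ∀ r, ρ r * ρ r = 1) (hγ : ∀ c, γ c * γ c = 1)
    (h : ∀ r c, M5 r c = ρ r * M r c * γ c) :
    {r : ℝ | ∃ u : m → ℝ, ∑ i, (u i) ^ 2 = 1 ∧
      r = Real.sqrt (∑ j, (Matrix.vecMul u M5 j) ^ 2)} ⊆
    {r : ℝ | ∃ u : m → ℝ, ∑ i, (u i) ^ 2 = 1 ∧
      r = Real.sqrt (∑ j, (Matrix.vecMul u M j) ^ 2)} := by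
  rintro x ⟨u, hu, rfl⟩
  refine ⟨fun i => ρ i * u i, ?_, ?_⟩
  · rw [← hu]
    refine Finset.sum_congr rfl fun i _ => ?_
    rw [mul_pow, sq (ρ i), hρ i, one_mul]
  · congr 1
    refine Finset.sum_congr rfl fun j _ => ?_
    have : Matrix.vecMul u M5 j = γ j * Matrix.vecMul (fun i => ρ i * u i) M j := by
      simp only [Matrix.vecMul, dotProduct, Finset.mul_sum]
      refine Finset.sum_congr rfl fun i _ => ?_
      rw [h i j]; ring
    rw [this, mul_pow, sq (γ j), hγ j, one_mul]

/-- `T̂₅` and `T̂` have the same singular values (same characteristic polynomial of their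
Gram matrices); in particular `σ_min(T̂₅) = σ_min(T̂)`. -/
theorem That5_same_singular_values (k : ℕ) (hk : 1 ≤ k)
    (E F : Matrix (Fin k) (Fin (k + 1)) ℝ)
    (hE : ∀ i j, E i j = if (j : ℕ) = (i : ℕ) then 1 else 0)
    (hF : ∀ i j, F i j = if (j : ℕ) = (i : ℕ) + 1 then 1 else 0) :
    (That5 k E F * (That5 k E F)ᵀ).charpoly = (That k E F * (That k E F)ᵀ).charpoly ∧
    sigmaMin (That5 k E F) = sigmaMin (That k E F) := by
  classical
  set ρ : (Fin k × Fin k) ⊕ (Fin k × Fin k) → ℝ :=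
    Sum.elim (fun p => (-1 : ℝ) ^ ((p.1 : ℕ) + (p.2 : ℕ) + 1))
      (fun p => (-1 : ℝ) ^ ((p.1 : ℕ) + (p.2 : ℕ) + 1)) with hρdef
  set γ : (Fin k × Fin (k + 1)) ⊕ (Fin (k + 1) × Fin k) → ℝ :=
    Sum.elim (fun p => (-1 : ℝ) ^ ((p.1 : ℕ) + (p.2 : ℕ) + 1))
      (fun p => (-1 : ℝ) ^ ((p.1 : ℕ) + (p.2 : ℕ))) with hγdef
  have hρ : ∀ r, ρ r * ρ r = 1 := by
    rintro (⟨a, b⟩ | ⟨a, b⟩) <;> exact neg_one_pow_mul_self _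
  have hγ : ∀ c, γ c * γ c = 1 := by
    rintro (⟨c, d⟩ | ⟨c, d⟩) <;> exact neg_one_pow_mul_self _
  -- key entrywise identity
  have h : ∀ r c, That5 k E F r c = ρ r * That k E F r c * γ c := by
    rintro (⟨a, b⟩ | ⟨a, b⟩) (⟨c, d⟩ | ⟨c, d⟩) <;>
      simp only [That, That5, Matrix.fromBlocks_apply₁₁, Matrix.fromBlocks_apply₁₂,
        Matrix.fromBlocks_apply₂₁, Matrix.fromBlocks_apply₂₂, Matrix.neg_apply,
        Matrix.kroneckerMap_apply, Matrix.one_apply, hE, hF, hρdef, hγdef, Sum.elim_inl,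
        Sum.elim_inr]
    · by_cases h1 : a = c
      · by_cases h2 : (d : ℕ) = (b : ℕ)
        · subst h1; rw [h2]
          simp only [if_true, mul_one, one_mul]
          exact (neg_one_pow_mul_self _).symm
        · simp [h1, h2]
      · simp [h1]
    · by_cases h1 : (c : ℕ) = (a : ℕ)
      · by_cases h2 : b = d
        · subst h2; rw [h1]
          simp only [if_true, mul_one, one_mul]
          rw [mul_comm]
          exact (neg_one_pow_mul_succ _).symm
        · simp [h1, h2]
      · simp [h1]
    · by_cases h1 : a = c
      · by_cases h2 : (d : ℕ) = (b : ℕ) + 1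
        · subst h1; rw [h2]
          simp only [if_true, mul_one, one_mul]
          have e : (a : ℕ) + ((b : ℕ) + 1) + 1 = ((a : ℕ) + (b : ℕ) + 1) + 1 := by ring
          rw [e]
          exact (neg_one_pow_mul_succ _).symm
        · simp [h1, h2]
      · simp [h1]
    · by_cases h1 : (c : ℕ) = (a : ℕ) + 1
      · by_cases h2 : b = d
        · subst h2; rw [h1]
          simp only [if_true, mul_one, one_mul]
          have e : (a : ℕ) + 1 + (b : ℕ) = (a : ℕ) + (b : ℕ) + 1 := by ring
          rw [e]
          exact (neg_one_pow_mul_self _).symm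
        · simp [h1, h2]
      · simp [h1]
  -- matrix form
  set D1 := Matrix.diagonal ρ with hD1def
  set D2 := Matrix.diagonal γ with hD2def
  have hM5 : That5 k E F = D1 * That k E F * D2 := by
    ext r c
    rw [hD1def, hD2def, Matrix.mul_diagonal, Matrix.diagonal_mul, h r c]
  have hD1sq : D1 * D1 = 1 := by
    rw [hD1def, Matrix.diagonal_mul_diagonal, funext hρ, Matrix.diagonal_one]
  have hD2sq : D2 * D2ᵀ = 1 := by
    rw [hD2def, Matrix.diagonal_transpose, Matrix.diagonal_mul_diagonal, funext hγ,
      Matrix.diagonal_one]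
  have hD1T : D1ᵀ = D1 := by rw [hD1def, Matrix.diagonal_transpose]
  constructor
  · have hGram : That5 k E F * (That5 k E F)ᵀ = D1 * (That k E F * (That k E F)ᵀ) * D1 := by
      rw [hM5, Matrix.transpose_mul, Matrix.transpose_mul, hD1T]
      calc D1 * That k E F * D2 * (D2ᵀ * ((That k E F)ᵀ * D1))
          = D1 * (That k E F * ((D2 * D2ᵀ) * (That k E F)ᵀ)) * D1 := by
            simp only [Matrix.mul_assoc]
        _ = D1 * (That k E F * (That k E F)ᵀ) * D1 := by rw [hD2sq, Matrix.one_mul]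
    rw [hGram]
    exact charpoly_conj_invol D1 _ hD1sq
  · unfold sigmaMin
    congr 1
    apply Set.Subset.antisymm
    · exact sigma_set_subset _ _ ρ γ hρ hγ h
    · refine sigma_set_subset _ _ ρ γ hρ hγ fun r c => ?_
      rw [h r c]
      symm
      calc ρ r * (ρ r * That k E F r c * γ c) * γ c
          = (ρ r * ρ r) * That k E F r c * (γ c * γ c) := by ring
        _ = That k E F r c := by rw [hρ r, hγ c]; ring
end

section
/- Let E_k = [I_k | 0], F_k = [0 | I_k] ∈ ℝ^{k×(k+1)} and let Ŵ = I_k ⊗ (F_k E_k^T) + (E_k F_k^T) ⊗ I_k ∈ ℝ^{k²×k²}. Then the largest singular value of Ŵ equals 2cos(π/(2k)). -/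
open Matrix Kronecker Real

/-- The largest singular value of a real matrix `M`: the supremum of `‖Mv‖₂` over unit
vectors `v`. -/
noncomputable def sigmaMax {m n : Type*} [Fintype m] [Fintype n] (M : Matrix m n ℝ) : ℝ :=
  sSup {r : ℝ | ∃ v : n → ℝ, ∑ j, (v j) ^ 2 = 1 ∧
    r = Real.sqrt (∑ i, (M.mulVec v i) ^ 2)}

/-!
Write `θ = π / (2k)` and `s n = sin (n θ)`. The matrix is `W = 1 ⊗ S + Sᵀ ⊗ 1` with `S` the
up-shift, so `(W v)(i, j) = v(i, j + 1) + v(i - 1, j)` with entries outside the grid read as zero.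
Both bounds on `σ_max(W)² = 4 cos² θ` come from `WᵀW` and the recurrence
`s (n - 1) + s (n + 1) = 2 cos θ · s n`:
* the positive vector `w(i, j) = s (i + j + 1)` satisfies `WᵀW w ≤ 4 cos² θ · w` entrywise, so the
  Schur test gives `‖W v‖² ≤ 4 cos² θ ‖v‖²`;
* the diagonal vector `x(i, i) = s (2i + 1)` is an eigenvector of `WᵀW` for `4 cos² θ`: the boundary
  terms vanish because `s 0 = s (2k) = 0`.
-/

open Finset

section SingularValue

variable {m n : Type*} [Fintype m] [Fintype n]

theorem sigmaMax_eq_of_sum_sq_mulVec {M : Matrix m n ℝ} {c : ℝ} (hc : 0 ≤ c)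
    (hle : ∀ v, ∑ i, (M *ᵥ v) i ^ 2 ≤ c ^ 2 * ∑ j, v j ^ 2)
    {x : n → ℝ} (hx : x ≠ 0) (heq : ∑ i, (M *ᵥ x) i ^ 2 = c ^ 2 * ∑ j, x j ^ 2) :
    sigmaMax M = c := by
  have hpos : 0 < ∑ j, x j ^ 2 := by
    have := dotProduct_self_eq_zero.not.mpr hx
    simp only [dotProduct, ← sq] at this
    exact lt_of_le_of_ne (sum_nonneg fun j _ => sq_nonneg _) (Ne.symm this)
  set t := (√(∑ j, x j ^ 2))⁻¹
  have ht : t ^ 2 * ∑ j, x j ^ 2 = 1 := by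
    rw [inv_pow, sq_sqrt hpos.le, inv_mul_cancel₀ hpos.ne']
  have hattained : ∃ v : n → ℝ, ∑ j, v j ^ 2 = 1 ∧ c = √(∑ i, (M *ᵥ v) i ^ 2) := by
    refine ⟨t • x, ?_, ?_⟩
    · simpa [mul_pow, ← mul_sum] using ht
    · simp only [mulVec_smul, Pi.smul_apply, smul_eq_mul, mul_pow, ← mul_sum, heq]
      rw [mul_left_comm, ht, mul_one, sqrt_sq hc]
  have hbounded : ∀ v : n → ℝ, ∑ j, v j ^ 2 = 1 → √(∑ i, (M *ᵥ v) i ^ 2) ≤ c := fun v hv => by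
    rw [sqrt_le_left hc]
    simpa [hv] using hle v
  refine le_antisymm (csSup_le ⟨c, hattained⟩ ?_) (le_csSup ⟨c, ?_⟩ hattained) <;>
    exact fun _ ⟨v, hv, hr⟩ => hr ▸ hbounded v hv

theorem sum_sq_mulVec_le_of_schur {A : Matrix m n ℝ} (hA : ∀ i j, 0 ≤ A i j) {w : n → ℝ}
    (hw : ∀ j, 0 < w j) {μ : ℝ} (hμ : ∀ j, (Aᵀ *ᵥ (A *ᵥ w)) j ≤ μ * w j) (v : n → ℝ) :
    ∑ i, (A *ᵥ v) i ^ 2 ≤ μ * ∑ j, v j ^ 2 := by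
  calc ∑ i, (A *ᵥ v) i ^ 2
      ≤ ∑ i, (A *ᵥ w) i * ∑ j, A i j * (v j ^ 2 / w j) := by
        refine sum_le_sum fun i _ => sum_sq_le_sum_mul_sum_of_sq_le_mul _
          (fun j _ => mul_nonneg (hA i j) (hw j).le)
          (fun j _ => mul_nonneg (hA i j) (div_nonneg (sq_nonneg _) (hw j).le)) fun j _ => ?_
        field_simp [(hw j).ne']
        rfl
    _ = ∑ j, (Aᵀ *ᵥ (A *ᵥ w)) j * (v j ^ 2 / w j) := by
        simp only [mulVec, dotProduct, transpose_apply, mul_sum, sum_mul]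
        rw [sum_comm]; simp only [mul_left_comm, mul_assoc]
    _ ≤ ∑ j, μ * w j * (v j ^ 2 / w j) := by
        gcongr with j; · exact div_nonneg (sq_nonneg _) (hw j).le
        exact hμ j
    _ = μ * ∑ j, v j ^ 2 := by
        rw [mul_sum]; congr 1 with j; field_simp [(hw j).ne']

theorem sum_sq_mulVec_eq_of_gram_mulVec {A : Matrix m n ℝ} {x : n → ℝ} {μ : ℝ}
    (hx : Aᵀ *ᵥ (A *ᵥ x) = μ • x) : ∑ i, (A *ᵥ x) i ^ 2 = μ * ∑ j, x j ^ 2 := by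
  have := dotProduct_mulVec x Aᵀ (A *ᵥ x)
  rw [hx, vecMul_transpose] at this
  simp only [dotProduct, Pi.smul_apply, smul_eq_mul] at this
  simp only [sq, mul_sum]
  rw [← this]; congr 1 with j; ring

end SingularValue

section Kronecker

variable {R m n : Type*} [CommSemiring R] [Fintype m] [Fintype n]

theorem one_kronecker_mulVec [DecidableEq m] (B : Matrix n n R) (v : m × n → R) :
    ((1 : Matrix m m R) ⊗ₖ B) *ᵥ v = fun p => (B *ᵥ fun q => v (p.1, q)) p.2 := by
  ext ⟨i, j⟩
  simp [mulVec, dotProduct, kroneckerMap_apply, Fintype.sum_prod_type, one_apply, ite_mul]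

theorem kronecker_one_mulVec [DecidableEq n] (A : Matrix m m R) (v : m × n → R) :
    (A ⊗ₖ (1 : Matrix n n R)) *ᵥ v = fun p => (A *ᵥ fun q => v (q, p.2)) p.1 := by
  ext ⟨i, j⟩
  simp [mulVec, dotProduct, kroneckerMap_apply, Fintype.sum_prod_type, one_apply, mul_ite]

end Kronecker

def upShift (k : ℕ) : Matrix (Fin k) (Fin k) ℝ :=
  of fun a b => if (b : ℕ) = a + 1 then 1 else 0

section upShift

variable {k : ℕ} {x : Fin k → ℝ} {g : ℤ → ℝ}

theorem upShift_mulVec_apply (hx : ∀ b : Fin k, x b = g b) (a : Fin k) :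
    (upShift k *ᵥ x) a = if (a : ℤ) + 1 < k then g (a + 1) else 0 := by
  simp only [mulVec, dotProduct, upShift, of_apply, ite_mul, one_mul, zero_mul, hx]
  split_ifs with h
  · rw [sum_eq_single ⟨a + 1, by omega⟩ (fun b _ hb => if_neg fun h' => hb (Fin.ext h'))
      (by simp)]
    simp
  · exact sum_eq_zero fun b _ => if_neg (by omega)

theorem upShift_transpose_mulVec_apply (hx : ∀ b : Fin k, x b = g b) (a : Fin k) :
    ((upShift k)ᵀ *ᵥ x) a = if 0 < (a : ℤ) then g (a - 1) else 0 := by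
  simp only [mulVec, dotProduct, upShift, transpose_apply, of_apply, ite_mul, one_mul, zero_mul,
    hx]
  split_ifs with h
  · rw [sum_eq_single ⟨a - 1, by omega⟩
      (fun b _ hb => if_neg fun h' => hb (Fin.ext (by simp only; omega))) (by simp)]
    rw [if_pos (by simp only; omega)]
    congr 1; simp only; omega
  · exact sum_eq_zero fun b _ => if_neg (by omega)

theorem mul_transpose_eq_upShift {E F : Matrix (Fin k) (Fin (k + 1)) ℝ}
    (hE : ∀ i j, E i j = if (j : ℕ) = (i : ℕ) then 1 else 0)
    (hF : ∀ i j, F i j = if (j : ℕ) = (i : ℕ) + 1 then 1 else 0) :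
    F * Eᵀ = upShift k := by
  ext a b
  simp only [mul_apply, transpose_apply, hE, hF, upShift, of_apply, mul_ite, mul_one, mul_zero]
  rw [sum_eq_single (Fin.castSucc b)
    (fun x _ hx => if_neg fun h => hx (Fin.ext (by simpa using h))) (by simp)]
  simp

end upShift

def gridShift (k : ℕ) : Matrix (Fin k × Fin k) (Fin k × Fin k) ℝ :=
  1 ⊗ₖ upShift k + (upShift k)ᵀ ⊗ₖ 1

section gridShift

variable {k : ℕ} {v : Fin k × Fin k → ℝ} {f : ℤ → ℤ → ℝ}

theorem gridShift_mulVec_apply (hv : ∀ i j, v (i, j) = f i j) (i j : Fin k) :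
    (gridShift k *ᵥ v) (i, j) =
      (if (j : ℤ) + 1 < k then f i (j + 1) else 0) +
        (if 0 < (i : ℤ) then f (i - 1) j else 0) := by
  rw [gridShift, add_mulVec, Pi.add_apply, one_kronecker_mulVec, kronecker_one_mulVec]
  exact congr_arg₂ (· + ·) (upShift_mulVec_apply (fun b => hv i b) j)
    (upShift_transpose_mulVec_apply (g := (f · j)) (fun b => hv b j) i)

theorem gridShift_transpose_mulVec_apply (hv : ∀ i j, v (i, j) = f i j) (i j : Fin k) :
    ((gridShift k)ᵀ *ᵥ v) (i, j) =
      (if 0 < (j : ℤ) then f i (j - 1) else 0) +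
        (if (i : ℤ) + 1 < k then f (i + 1) j else 0) := by
  rw [gridShift, transpose_add, ← kroneckerMap_transpose, ← kroneckerMap_transpose,
    transpose_one, transpose_transpose, add_mulVec, Pi.add_apply, one_kronecker_mulVec,
    kronecker_one_mulVec]
  exact congr_arg₂ (· + ·) (upShift_transpose_mulVec_apply (fun b => hv i b) j)
    (upShift_mulVec_apply (g := (f · j)) (fun b => hv b j) i)

theorem gridShift_gram_mulVec_apply (hv : ∀ i j, v (i, j) = f i j) (i j : Fin k) :
    ((gridShift k)ᵀ *ᵥ (gridShift k *ᵥ v)) (i, j) =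
      (if 0 < (j : ℤ) then f i j + (if 0 < (i : ℤ) then f (i - 1) (j - 1) else 0) else 0) +
      (if (i : ℤ) + 1 < k then (if (j : ℤ) + 1 < k then f (i + 1) (j + 1) else 0) + f i j
        else 0) := by
  rw [gridShift_transpose_mulVec_apply
    (f := fun a b => (if b + 1 < k then f a (b + 1) else 0) + (if 0 < a then f (a - 1) b else 0))
    (gridShift_mulVec_apply hv) i j]
  have hj : (j : ℤ) < k := by omega
  have hi : 0 < (i : ℤ) + 1 := by omega
  simp only [sub_add_cancel, add_sub_cancel_right, if_pos hj, if_pos hi]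

theorem gridShift_nonneg (p q : Fin k × Fin k) : 0 ≤ gridShift k p q := by
  simp only [gridShift, Matrix.add_apply, kroneckerMap_apply, transpose_apply, one_apply, upShift,
    of_apply]
  positivity

end gridShift

noncomputable def sinFrac (k : ℕ) (n : ℤ) : ℝ := sin (n * (π / (2 * k)))

section sinFrac

variable {k : ℕ}

theorem sinFrac_add_sinFrac {a n b : ℤ} (ha : a + 1 = n) (hb : n + 1 = b) :
    sinFrac k a + sinFrac k b = 2 * cos (π / (2 * k)) * sinFrac k n := by
  obtain rfl : a = n - 1 := by omega
  subst hb
  simp only [sinFrac, Int.cast_sub, Int.cast_add, Int.cast_one, sub_mul, add_mul, one_mul,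
    sin_sub, sin_add]
  ring

theorem sinFrac_zero : sinFrac k 0 = 0 := by simp [sinFrac]

theorem sinFrac_two_mul_self : sinFrac k (2 * k) = 0 := by
  rcases k.eq_zero_or_pos with rfl | hk
  · simp [sinFrac]
  · rw [sinFrac, show ((2 * k : ℤ) : ℝ) * (π / (2 * k)) = π by push_cast; field_simp, sin_pi]

theorem sinFrac_nonneg {n : ℤ} (h0 : 0 ≤ n) (h1 : n ≤ 2 * k) : 0 ≤ sinFrac k n := by
  rcases k.eq_zero_or_pos with rfl | hk
  · simp [sinFrac]
  have hn : (0 : ℝ) ≤ n := by exact_mod_cast h0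
  refine sin_nonneg_of_nonneg_of_le_pi (by positivity) ?_
  rw [← mul_div_assoc, div_le_iff₀ (by positivity)]
  exact mul_le_mul_of_nonneg_right (by exact_mod_cast h1) pi_pos.le |>.trans_eq (mul_comm _ _)

theorem sinFrac_pos {n : ℤ} (h0 : 0 < n) (h1 : n < 2 * k) : 0 < sinFrac k n := by
  have hk : (0 : ℝ) < k := by exact_mod_cast (show 0 < k by omega)
  have hn : (0 : ℝ) < n := by exact_mod_cast h0
  refine sin_pos_of_pos_of_lt_pi (by positivity) ?_
  rw [← mul_div_assoc, div_lt_iff₀ (by positivity)]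
  exact mul_lt_mul_of_pos_right (by exact_mod_cast h1) pi_pos |>.trans_eq (mul_comm _ _)

theorem cos_pi_div_two_mul_nonneg (k : ℕ) : 0 ≤ cos (π / (2 * k)) := by
  rcases k.eq_zero_or_pos with rfl | hk
  · simp
  have h0 : 0 ≤ π / (2 * k) := by positivity
  exact cos_nonneg_of_mem_Icc
    ⟨by linarith [pi_pos], div_le_div_of_nonneg_left pi_pos.le two_pos (by norm_cast; omega)⟩

end sinFrac

section gram

variable {k : ℕ}

theorem sq_mul_sinFrac (n : ℤ) :
    (2 * cos (π / (2 * k))) ^ 2 * sinFrac k n =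
      sinFrac k (n - 2) + 2 * sinFrac k n + sinFrac k (n + 2) := by
  have hn := sinFrac_add_sinFrac (k := k) (a := n - 1) (n := n) (b := n + 1) (by ring) rfl
  have hl := sinFrac_add_sinFrac (k := k) (a := n - 2) (n := n - 1) (b := n) (by ring) (by ring)
  have hr := sinFrac_add_sinFrac (k := k) (a := n) (n := n + 1) (b := n + 2) rfl (by ring)
  linear_combination -(2 * cos (π / (2 * k))) * hn - hl - hr

theorem gridShift_gram_mulVec_sinFrac_le (i j : Fin k) :
    ((gridShift k)ᵀ *ᵥ (gridShift k *ᵥ fun p => sinFrac k (p.1 + p.2 + 1))) (i, j) ≤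
      (2 * cos (π / (2 * k))) ^ 2 * sinFrac k (i + j + 1) := by
  rw [gridShift_gram_mulVec_apply (f := fun a b => sinFrac k (a + b + 1)) (fun _ _ => rfl)]
  set n : ℤ := i + j + 1
  rw [show (i : ℤ) - 1 + (j - 1) + 1 = n - 2 by ring,
    show (i : ℤ) + 1 + (j + 1) + 1 = n + 2 by ring, sq_mul_sinFrac]
  have hc := cos_pi_div_two_mul_nonneg k
  have hlow : 0 ≤ sinFrac k (n - 2) + sinFrac k n := by
    rw [sinFrac_add_sinFrac (n := n - 1) (by ring) (by ring)]
    exact mul_nonneg (by positivity) (sinFrac_nonneg (by omega) (by omega))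
  have hhigh : 0 ≤ sinFrac k n + sinFrac k (n + 2) := by
    rw [sinFrac_add_sinFrac (n := n + 1) (by ring) (by ring)]
    exact mul_nonneg (by positivity) (sinFrac_nonneg (by omega) (by omega))
  have hj : 0 < (j : ℤ) → 0 ≤ sinFrac k (n - 2) := fun _ =>
    sinFrac_nonneg (by omega) (by omega)
  have hi : (i : ℤ) + 1 < k → 0 ≤ sinFrac k (n + 2) := fun _ =>
    sinFrac_nonneg (by omega) (by omega)
  split_ifs <;> first | linarith | linarith [hj ‹_›] | linarith [hi ‹_›] |
    linarith [hj ‹_›, hi ‹_›]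

theorem gridShift_gram_mulVec_diag :
    (gridShift k)ᵀ *ᵥ
        (gridShift k *ᵥ fun p => if (p.1 : ℤ) = p.2 then sinFrac k (2 * p.1 + 1) else 0) =
      (2 * cos (π / (2 * k))) ^ 2 •
        fun p => if (p.1 : ℤ) = p.2 then sinFrac k (2 * p.1 + 1) else 0 := by
  ext ⟨i, j⟩
  rw [gridShift_gram_mulVec_apply (f := fun a b => if a = b then sinFrac k (2 * a + 1) else 0)
    (fun _ _ => rfl)]
  simp only [Pi.smul_apply, smul_eq_mul, sub_left_inj, add_left_inj]
  by_cases hij : (i : ℤ) = j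
  · simp only [hij, if_true]
    set m : ℤ := ((j : ℕ) : ℤ)
    have hlow : ¬ 0 < m → sinFrac k (2 * (m - 1) + 1) + sinFrac k (2 * m + 1) = 0 := fun _ => by
      rw [sinFrac_add_sinFrac (n := 2 * m) (by ring) (by ring), show m = 0 by omega]
      simp [sinFrac_zero]
    have hhigh : ¬ m + 1 < k → sinFrac k (2 * m + 1) + sinFrac k (2 * (m + 1) + 1) = 0 :=
      fun _ => by
        rw [sinFrac_add_sinFrac (n := 2 * k) (by omega) (by omega), sinFrac_two_mul_self,
          mul_zero]
    rw [sq_mul_sinFrac, show 2 * m + 1 - 2 = 2 * (m - 1) + 1 by ring,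
      show 2 * m + 1 + 2 = 2 * (m + 1) + 1 by ring]
    split_ifs <;> first | linarith | linarith [hlow ‹_›] | linarith [hhigh ‹_›] |
      linarith [hlow ‹_›, hhigh ‹_›]
  · simp [hij]

end gram

/-- With `E_k = [I_k | 0]`, `F_k = [0 | I_k]`, the matrix
`Ŵ = I_k ⊗ (F_k E_kᵀ) + (E_k F_kᵀ) ⊗ I_k` has largest singular value `2cos(π/(2k))`. -/
theorem sigmaMax_What (k : ℕ) (hk : 1 ≤ k)
    (E F : Matrix (Fin k) (Fin (k + 1)) ℝ)
    (hE : ∀ i j, E i j = if (j : ℕ) = (i : ℕ) then 1 else 0)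
    (hF : ∀ i j, F i j = if (j : ℕ) = (i : ℕ) + 1 then 1 else 0) :
    sigmaMax ((1 : Matrix (Fin k) (Fin k) ℝ) ⊗ₖ (F * Eᵀ) +
        (E * Fᵀ) ⊗ₖ (1 : Matrix (Fin k) (Fin k) ℝ)) =
      2 * Real.cos (Real.pi / (2 * k)) := by
  have hW : (1 : Matrix (Fin k) (Fin k) ℝ) ⊗ₖ (F * Eᵀ) + (E * Fᵀ) ⊗ₖ 1 = gridShift k := by
    rw [← transpose_transpose E, ← transpose_mul, transpose_transpose,
      mul_transpose_eq_upShift hE hF, gridShift]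
  set x : Fin k × Fin k → ℝ :=
    fun p => if (p.1 : ℤ) = p.2 then sinFrac k (2 * p.1 + 1) else 0
  have hx : x ≠ 0 := fun h => by
    have := congr_fun h (⟨0, hk⟩, ⟨0, hk⟩)
    simp only [x, if_true, Pi.zero_apply] at this
    exact (sinFrac_pos (k := k) (by simp) (by simp; omega)).ne' this
  rw [hW]
  refine sigmaMax_eq_of_sum_sq_mulVec (by linarith [cos_pi_div_two_mul_nonneg k])
    (sum_sq_mulVec_le_of_schur gridShift_nonneg (fun p => sinFrac_pos (by omega) (by omega))
      (fun p => gridShift_gram_mulVec_sinFrac_le p.1 p.2)) hx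
    (sum_sq_mulVec_eq_of_gram_mulVec gridShift_gram_mulVec_diag)
end
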